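/- arXiv:2211.02433 — 2 statements merged into one kernel-verified Lean document; each statement's English description precedes it below -/
import Mathlib

section
/- Let V be a finite-dimensional vector space over K ∈ {ℝ, ℂ} and F a closed subset of the Grassmann manifold Gr(V). Suppose B^(i) → B in the space (∧²V)* of skew-symmetric bilinear forms on V, with N(B^(i)) ∈ F for every i ∈ ℕ. Then every cluster point W in Gr(V) of the sequence {N(B^(i))} satisfies W ∈ F and W ⊆ N(B). -/
open Module Filter Topology

noncomputable section

variable {𝕜 : Type} [RCLike 𝕜]

noncomputable instance grassmannianTopology {V : Type} [NormedAddCommGroup V]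
    [InnerProductSpace 𝕜 V] [FiniteDimensional 𝕜 V] : TopologicalSpace (Submodule 𝕜 V) :=
  TopologicalSpace.induced
    (fun W : Submodule 𝕜 V => (W.subtypeL.comp (W.orthogonalProjection) : V →L[𝕜] V))
    inferInstance

variable {V : Type} [NormedAddCommGroup V] [InnerProductSpace 𝕜 V] [FiniteDimensional 𝕜 V]

/-- `B` is a skew-symmetric bilinear form. -/
def IsSkew (B : V →L[𝕜] V →L[𝕜] 𝕜) : Prop := ∀ x y, B x y = - B y x

/-- `S^{⊥_B}`. -/
def perpB (B : V →L[𝕜] V →L[𝕜] 𝕜) (S : Submodule 𝕜 V) : Submodule 𝕜 V where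
  carrier := {w | ∀ v ∈ S, B v w = 0}
  add_mem' := by
    intro a b ha hb v hv
    simp [map_add, ha v hv, hb v hv]
  zero_mem' := by
    intro v hv
    simp
  smul_mem' := by
    intro c w hw v hv
    simp [hw v hv]

/-- The null space `N(B)`. -/
def nullSpace (B : V →L[𝕜] V →L[𝕜] 𝕜) : Submodule 𝕜 V := perpB B ⊤

/-- `S ⊥_B T`. -/
def IsOrthoPair (B : V →L[𝕜] V →L[𝕜] 𝕜) (S T : Submodule 𝕜 V) : Prop :=
  ∀ v ∈ S, ∀ w ∈ T, B v w = 0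

/-- `W` is a `B`-isotropic subspace. -/
def IsIsotropic (B : V →L[𝕜] V →L[𝕜] 𝕜) (W : Submodule 𝕜 V) : Prop := IsOrthoPair B W W


/-- If `B⁽ⁱ⁾ → B` in the space of skew-symmetric bilinear forms on a
finite-dimensional vector space `V` over `𝕜 ∈ {ℝ, ℂ}`, with `N(B⁽ⁱ⁾) ∈ F` for every `i`,
where `F` is a closed subset of the Grassmannian, then every cluster point `W` of the
sequence `N(B⁽ⁱ⁾)` satisfies `W ∈ F` and `W ⊆ N(B)`. -/
theorem cluster_point_of_nullSpaces_mem_closed_le_nullSpace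
    (F : Set (Submodule 𝕜 V)) (hF : IsClosed F)
    (Bseq : ℕ → (V →L[𝕜] V →L[𝕜] 𝕜)) (B : V →L[𝕜] V →L[𝕜] 𝕜)
    (hskew : ∀ i, IsSkew (Bseq i)) (hBskew : IsSkew B)
    (hconv : Tendsto Bseq atTop (𝓝 B))
    (hmem : ∀ i, nullSpace (Bseq i) ∈ F)
    (W : Submodule 𝕜 V)
    (hW : MapClusterPt W atTop (fun i => nullSpace (Bseq i))) :
    W ∈ F ∧ W ≤ nullSpace B := by
  constructor
  · have h1 : map (fun i => nullSpace (Bseq i)) atTop ≤ 𝓟 F :=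
      le_principal_iff.2 (mem_map.2 (Filter.Eventually.of_forall hmem))
    exact hF.closure_eq ▸ mem_closure_iff_clusterPt.2 (hW.clusterPt.mono h1)
  · intro w hw v _
    set π : Submodule 𝕜 V → (V →L[𝕜] V) :=
      fun S => (S.subtypeL.comp (S.orthogonalProjection) : V →L[𝕜] V) with hπdef
    have hπ : Continuous π := continuous_induced_dom
    have hP : MapClusterPt (π W) atTop (π ∘ fun i => nullSpace (Bseq i)) :=
      hW.continuousAt_comp hπ.continuousAt
    have happ : Continuous fun q : (V →L[𝕜] 𝕜) × V => q.1 q.2 :=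
      isBoundedBilinearMap_apply.continuous
    have ha : Continuous fun q : (V →L[𝕜] V →L[𝕜] 𝕜) × V => q.1 q.2 :=
      isBoundedBilinearMap_apply.continuous
    have hb : Continuous fun q : (V →L[𝕜] V) × V => q.1 q.2 :=
      isBoundedBilinearMap_apply.continuous
    have hc : Continuous (fun p : (V →L[𝕜] V →L[𝕜] 𝕜) × (V →L[𝕜] V) => p.1 v (p.2 w)) :=
      happ.comp ((ha.comp (continuous_fst.prodMk continuous_const)).prodMk
        (hb.comp (continuous_snd.prodMk continuous_const)))
    have key : ∀ s ∈ 𝓝 (B v ((π W) w)), (0 : 𝕜) ∈ s := by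
      intro s hs
      have hpre : (fun p : (V →L[𝕜] V →L[𝕜] 𝕜) × (V →L[𝕜] V) => p.1 v (p.2 w)) ⁻¹' s
          ∈ 𝓝 ((B, π W) : (V →L[𝕜] V →L[𝕜] 𝕜) × (V →L[𝕜] V)) :=
        hc.continuousAt.preimage_mem_nhds hs
      rw [mem_nhds_prod_iff] at hpre
      obtain ⟨t1, ht1, t2, ht2, hsub⟩ := hpre
      have h1 : ∀ᶠ i in atTop, Bseq i ∈ t1 := hconv ht1
      have h2 : ∃ᶠ i in atTop, π (nullSpace (Bseq i)) ∈ t2 :=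
        (mapClusterPt_iff_frequently.1 hP) t2 ht2
      obtain ⟨i, hi2, hi1⟩ := (h2.and_eventually h1).exists
      have hmemval : π (nullSpace (Bseq i)) w ∈ nullSpace (Bseq i) :=
        Submodule.coe_mem ((nullSpace (Bseq i)).orthogonalProjection w)
      have hz : Bseq i v (π (nullSpace (Bseq i)) w) = 0 := hmemval v trivial
      have : Bseq i v (π (nullSpace (Bseq i)) w) ∈ s := hsub (Set.mk_mem_prod hi1 hi2)
      rwa [hz] at this
    have hcl : B v ((π W) w) ∈ closure ({(0 : 𝕜)} : Set 𝕜) := by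
      rw [mem_closure_iff_nhds]
      exact fun t ht => ⟨0, key t ht, rfl⟩
    rw [closure_singleton, Set.mem_singleton_iff] at hcl
    have hpw : (π W) w = w := by
      simp only [hπdef, ContinuousLinearMap.comp_apply, Submodule.subtypeL_apply]
      exact congrArg Subtype.val (Submodule.orthogonalProjection_mem_subspace_eq_self (⟨w, hw⟩ : W))
    rwa [hpw] at hcl
end
end

section
/- Let V be a vector space over K ∈ {ℝ, ℂ} with n := dim_K V < ∞, and let S ⊆ (∧²V)* be any subset. Then the restricted null-space mapping N|_S : S → Gr(V), B ↦ N(B), is continuous if and only if for every k ∈ {0, …, n} the set S ∩ (∧²V)*_k is relatively closed in S. -/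
open Module Filter Topology

noncomputable section

variable {𝕜 : Type} [RCLike 𝕜]

variable {V : Type} [NormedAddCommGroup V] [InnerProductSpace 𝕜 V] [FiniteDimensional 𝕜 V]

/-! ### Auxiliary material for the proof -/

set_option maxHeartbeats 1000000

/-- The orthogonal projection onto `U`, as a continuous linear endomorphism of `V`. -/
noncomputable def projCLM (U : Submodule 𝕜 V) : V →L[𝕜] V :=
  U.subtypeL.comp (Submodule.orthogonalProjection U)

@[simp] lemma projCLM_apply (U : Submodule 𝕜 V) (x : V) :
    projCLM U x = ↑(Submodule.orthogonalProjection U x) := rfl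

section Aux

variable {F : Type} [NormedAddCommGroup F] [NormedSpace 𝕜 F] [FiniteDimensional 𝕜 F]

omit [FiniteDimensional 𝕜 F] in
theorem ker_antilip (T₀ : V →L[𝕜] F) :
    ∃ C : ℝ, 1 ≤ C ∧ ∀ u ∈ (LinearMap.ker (T₀ : V →ₗ[𝕜] F))ᗮ, ‖u‖ ≤ C * ‖T₀ u‖ := by
  set W := LinearMap.ker (T₀ : V →ₗ[𝕜] F)
  set f : ↥Wᗮ →ₗ[𝕜] F := T₀.toLinearMap ∘ₗ Wᗮ.subtype with hf
  have hinj : Function.Injective f := by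
    intro x y hxy
    have hx : (↑x - ↑y : V) ∈ W := by
      simp only [W, LinearMap.mem_ker, map_sub]
      have : T₀ ↑x = T₀ ↑y := hxy
      simp [this]
    have hx2 : (↑x - ↑y : V) ∈ Wᗮ := Wᗮ.sub_mem x.2 y.2
    have h0 : (↑x - ↑y : V) = 0 := by
      have h := Submodule.mem_inf.2 ⟨hx, hx2⟩
      rwa [Submodule.inf_orthogonal_eq_bot, Submodule.mem_bot] at h
    exact Subtype.ext (sub_eq_zero.1 h0)
  set e := (LinearEquiv.ofInjective f hinj).toContinuousLinearEquiv with he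
  set K : ℝ := ‖(e.symm : LinearMap.range f →L[𝕜] ↥Wᗮ)‖ with hK
  refine ⟨K + 1, ?_, ?_⟩
  · have : (0:ℝ) ≤ K := hK ▸ ContinuousLinearMap.opNorm_nonneg _
    linarith
  · intro u hu
    have h1 : ‖(⟨u, hu⟩ : ↥Wᗮ)‖ ≤ K * ‖e ⟨u, hu⟩‖ := by
      have := e.antilipschitz.le_mul_dist ⟨u, hu⟩ 0
      simpa [dist_eq_norm, hK] using this
    have h2 : ‖e (⟨u, hu⟩ : ↥Wᗮ)‖ = ‖T₀ u‖ := by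
      have : ((e ⟨u, hu⟩ : LinearMap.range f) : F) = T₀ u := by
        rw [he, LinearEquiv.coe_toContinuousLinearEquiv']
        simp [f]
      rw [← this]; rfl
    have h3 : ‖(⟨u, hu⟩ : ↥Wᗮ)‖ = ‖u‖ := rfl
    rw [h3, h2] at h1
    nlinarith [norm_nonneg (T₀ u), norm_nonneg u]

theorem ker_proj_close (T₀ : V →L[𝕜] F) {ε : ℝ} (hε : 0 < ε) :
    ∃ δ > 0, ∀ T : V →L[𝕜] F, ‖T - T₀‖ < δ →
      finrank 𝕜 (LinearMap.ker (T : V →ₗ[𝕜] F)) = finrank 𝕜 (LinearMap.ker (T₀ : V →ₗ[𝕜] F)) →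
      ‖(projCLM (LinearMap.ker (T : V →ₗ[𝕜] F))) - (projCLM (LinearMap.ker (T₀ : V →ₗ[𝕜] F)))‖ ≤ ε := by
  obtain ⟨C, hC1, hC⟩ := ker_antilip T₀
  have hC0 : (0:ℝ) < C := lt_of_lt_of_le one_pos hC1
  set W := LinearMap.ker (T₀ : V →ₗ[𝕜] F) with hW
  set η : ℝ := min (ε/3) (1/2) with hη
  have hη0 : 0 < η := by positivity
  have hηhalf : η ≤ 1/2 := min_le_right _ _
  have hηε : 3 * η ≤ ε := by
    have := min_le_left (ε/3) (1/2); linarith [this]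
  refine ⟨η / C, by positivity, ?_⟩
  intro T hT hrank
  set W' := LinearMap.ker (T : V →ₗ[𝕜] F) with hW'
  -- Key 1 : every x in W' is η-close to W
  have hKey1 : ∀ x ∈ W', ‖x - ↑(Submodule.orthogonalProjection W x)‖ ≤ η * ‖x‖ := by
    intro x hx
    set u : V := x - ↑(Submodule.orthogonalProjection W x) with hu
    have humem : u ∈ Wᗮ := Submodule.sub_starProjection_mem_orthogonal x
    have hT0u : T₀ u = (T₀ - T) x := by
      have h1 : T₀ (W.starProjection x) = 0 :=
        LinearMap.mem_ker.1 (Submodule.orthogonalProjection W x).2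
      have h2 : T x = 0 := LinearMap.mem_ker.1 hx
      simp [hu, map_sub, h1, ContinuousLinearMap.sub_apply, h2]
    have hb : ‖T₀ u‖ ≤ (η / C) * ‖x‖ := by
      rw [hT0u]
      calc ‖(T₀ - T) x‖ ≤ ‖T₀ - T‖ * ‖x‖ := ContinuousLinearMap.le_opNorm _ _
        _ ≤ (η / C) * ‖x‖ := by
            have : ‖T₀ - T‖ = ‖T - T₀‖ := norm_sub_rev _ _
            have h := le_of_lt hT
            apply mul_le_mul_of_nonneg_right _ (norm_nonneg x)
            rw [this]; exact h
    calc ‖u‖ ≤ C * ‖T₀ u‖ := hC u humem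
      _ ≤ C * ((η / C) * ‖x‖) := by
          exact mul_le_mul_of_nonneg_left hb (le_of_lt hC0)
      _ = η * ‖x‖ := by field_simp
  -- Key 2 : every y in W is 2η-close to W'
  have hKey2 : ∀ y ∈ W, ‖y - ↑(Submodule.orthogonalProjection W' y)‖ ≤ 2 * η * ‖y‖ := by
    intro y hy
    set φ : ↥W' →ₗ[𝕜] ↥W :=
      ((Submodule.orthogonalProjection W : V →L[𝕜] W) : V →ₗ[𝕜] W) ∘ₗ W'.subtype with hφ
    have hφinj : Function.Injective φ := by
      rw [← LinearMap.ker_eq_bot, LinearMap.ker_eq_bot']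
      intro x hx0
      have hpx : (↑(Submodule.orthogonalProjection W (↑x : V)) : V) = 0 := by
        have : Submodule.orthogonalProjection W (↑x : V) = 0 := hx0
        rw [this]; rfl
      have hb := hKey1 ↑x x.2
      rw [hpx, sub_zero] at hb
      have : ‖(↑x : V)‖ = 0 := by nlinarith [norm_nonneg (↑x : V)]
      exact Subtype.ext (norm_eq_zero.1 this)
    have hφsurj : Function.Surjective φ :=
      (LinearMap.injective_iff_surjective_of_finrank_eq_finrank hrank).1 hφinj
    obtain ⟨x, hxy⟩ := hφsurj ⟨y, hy⟩
    have hPxy : (↑(Submodule.orthogonalProjection W (↑x : V)) : V) = y := by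
      have := congrArg (Subtype.val) hxy
      exact this
    have hx1 := hKey1 ↑x x.2
    rw [hPxy] at hx1
    -- bound ‖x‖
    have hxn : ‖(↑x : V)‖ ≤ 2 * ‖y‖ := by
      have h1 : ‖(↑x : V)‖ ≤ ‖(↑x : V) - y‖ + ‖y‖ := by simpa using norm_add_le ((↑x : V) - y) y
      have h2 : ‖(↑x : V) - y‖ ≤ η * ‖(↑x : V)‖ := hx1
      nlinarith [norm_nonneg (↑x : V), norm_nonneg y, hηhalf]
    have hyx : ‖y - ↑x‖ ≤ 2 * η * ‖y‖ := by
      have h2 : ‖y - (↑x : V)‖ ≤ η * ‖(↑x : V)‖ := by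
        rw [norm_sub_rev]; exact hx1
      nlinarith [norm_nonneg y, hη0.le]
    -- minimality of orthogonal projection
    have hmin : ‖y - ↑(Submodule.orthogonalProjection W' y)‖ ≤ ‖y - ↑x‖ := by
      rw [show ‖y - ↑(Submodule.orthogonalProjection W' y)‖ = ⨅ x : W', ‖y - x‖ from Submodule.starProjection_minimal y]
      exact ciInf_le ⟨0, fun b hb => by obtain ⟨z, hz⟩ := hb; rw [← hz]; positivity⟩ x
    linarith
  -- Key 3 : the projection onto W' is small on Wᗮ
  have hKey3 : ∀ z ∈ Wᗮ, ‖(↑(Submodule.orthogonalProjection W' z) : V)‖ ≤ η * ‖z‖ := by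
    intro z hz
    set p : V := ↑(Submodule.orthogonalProjection W' z) with hp
    have hpW' : p ∈ W' := (Submodule.orthogonalProjection W' z).2
    have h1 : ‖p‖^2 = RCLike.re (inner 𝕜 p z : 𝕜) := by
      have horth : (inner 𝕜 p (z - p) : 𝕜) = 0 :=
        Submodule.inner_right_of_mem_orthogonal hpW' (Submodule.sub_starProjection_mem_orthogonal z)
      have : (inner 𝕜 p z : 𝕜) = inner 𝕜 p p := by
        have := inner_sub_right (𝕜 := 𝕜) p z p
        rw [horth] at this
        linear_combination -this
      rw [this, inner_self_eq_norm_sq]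
    have h2 : RCLike.re (inner 𝕜 p z : 𝕜) ≤ η * ‖p‖ * ‖z‖ := by
      have hsplit : (inner 𝕜 p z : 𝕜) = inner 𝕜 (p - ↑(Submodule.orthogonalProjection W p)) z := by
        have hPpW : (↑(Submodule.orthogonalProjection W p) : V) ∈ W := (Submodule.orthogonalProjection W p).2
        have : (inner 𝕜 (↑(Submodule.orthogonalProjection W p) : V) z : 𝕜) = 0 :=
          Submodule.inner_right_of_mem_orthogonal hPpW hz
        rw [inner_sub_left, this, sub_zero]
      rw [hsplit]
      calc RCLike.re (inner 𝕜 (p - ↑(Submodule.orthogonalProjection W p)) z : 𝕜)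
          ≤ ‖(inner 𝕜 (p - ↑(Submodule.orthogonalProjection W p)) z : 𝕜)‖ := RCLike.re_le_norm _
        _ ≤ ‖p - ↑(Submodule.orthogonalProjection W p)‖ * ‖z‖ := norm_inner_le_norm _ _
        _ ≤ (η * ‖p‖) * ‖z‖ :=
            mul_le_mul_of_nonneg_right (hKey1 p hpW') (norm_nonneg z)
        _ = η * ‖p‖ * ‖z‖ := by ring
    have h3 : ‖p‖^2 ≤ η * ‖p‖ * ‖z‖ := le_trans (le_of_eq h1) h2
    rcases eq_or_lt_of_le (norm_nonneg p) with h | h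
    · rw [← h]; positivity
    · nlinarith
  -- assemble
  apply ContinuousLinearMap.opNorm_le_bound _ (le_of_lt hε)
  intro x
  have hsplit : ((projCLM W') - (projCLM W)) x
      = (projCLM W') (x - (projCLM W) x) + ((projCLM W') ((projCLM W) x) - (projCLM W) x) := by
    simp only [ContinuousLinearMap.sub_apply, map_sub]
    abel
  have hterm1 : ‖(projCLM W') (x - (projCLM W) x)‖ ≤ η * ‖x‖ := by
    have hzmem : x - (projCLM W) x ∈ Wᗮ := by
      simpa using Submodule.sub_starProjection_mem_orthogonal (K := W) x
    have := hKey3 _ hzmem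
    have hle : ‖x - (projCLM W) x‖ ≤ ‖x‖ := by
      have h : (↑(Submodule.orthogonalProjection Wᗮ x) : V) = x - ↑(Submodule.orthogonalProjection W x) :=
          Submodule.starProjection_orthogonal_val (K := W) x
      calc ‖x - (projCLM W) x‖ = ‖(↑(Submodule.orthogonalProjection Wᗮ x) : V)‖ := by
            rw [h]; rfl
        _ ≤ ‖x‖ := by
            have h1 : ‖Submodule.orthogonalProjection Wᗮ x‖ ≤ ‖x‖ := by
              calc ‖Submodule.orthogonalProjection Wᗮ x‖
                  ≤ ‖(Submodule.orthogonalProjection Wᗮ : V →L[𝕜] ↥Wᗮ)‖ * ‖x‖ :=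
                    ContinuousLinearMap.le_opNorm _ _
                _ ≤ 1 * ‖x‖ :=
                    mul_le_mul_of_nonneg_right (Submodule.orthogonalProjection_norm_le _) (norm_nonneg x)
                _ = ‖x‖ := one_mul _
            exact h1
    calc ‖(projCLM W') (x - (projCLM W) x)‖
        = ‖(↑(Submodule.orthogonalProjection W' (x - (projCLM W) x)) : V)‖ := rfl
      _ ≤ η * ‖x - (projCLM W) x‖ := this
      _ ≤ η * ‖x‖ := mul_le_mul_of_nonneg_left hle (le_of_lt hη0)
  have hterm2 : ‖(projCLM W') ((projCLM W) x) - (projCLM W) x‖ ≤ 2 * η * ‖x‖ := by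
    have hmem : (projCLM W) x ∈ W := (Submodule.orthogonalProjection W x).2
    have := hKey2 _ hmem
    have hle : ‖(projCLM W) x‖ ≤ ‖x‖ := by
      calc ‖(projCLM W) x‖ = ‖Submodule.orthogonalProjection W x‖ := rfl
        _ ≤ 1 * ‖x‖ := le_trans (ContinuousLinearMap.le_opNorm _ _)
            (mul_le_mul_of_nonneg_right (Submodule.orthogonalProjection_norm_le _) (norm_nonneg x))
        _ = ‖x‖ := one_mul _
    calc ‖(projCLM W') ((projCLM W) x) - (projCLM W) x‖
        = ‖(projCLM W) x - (projCLM W') ((projCLM W) x)‖ := norm_sub_rev _ _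
      _ ≤ 2 * η * ‖(projCLM W) x‖ := this
      _ ≤ 2 * η * ‖x‖ := by nlinarith
  calc ‖((projCLM W') - (projCLM W)) x‖
      ≤ ‖(projCLM W') (x - (projCLM W) x)‖ + ‖(projCLM W') ((projCLM W) x) - (projCLM W) x‖ := by
        rw [hsplit]; exact norm_add_le _ _
    _ ≤ η * ‖x‖ + 2 * η * ‖x‖ := add_le_add hterm1 hterm2
    _ ≤ ε * ‖x‖ := by nlinarith [norm_nonneg x]

end Aux

lemma nullSpace_eq_ker (B : V →L[𝕜] V →L[𝕜] 𝕜) : nullSpace B = LinearMap.ker (B.flip : V →ₗ[𝕜] V →L[𝕜] 𝕜) := by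
  ext w
  have hmem : w ∈ nullSpace B ↔ ∀ v ∈ (⊤ : Submodule 𝕜 V), B v w = 0 := Iff.rfl
  rw [hmem, LinearMap.mem_ker]
  constructor
  · intro h
    ext v
    simpa [ContinuousLinearMap.flip_apply] using h v trivial
  · intro h v _
    have := congrArg (fun f : V →L[𝕜] 𝕜 => f v) h
    simpa [ContinuousLinearMap.flip_apply] using this

lemma trace_projCLM (U : Submodule 𝕜 V) :
    LinearMap.trace 𝕜 V ((projCLM U : V →L[𝕜] V) : V →ₗ[𝕜] V) = (finrank 𝕜 U : 𝕜) := by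
  rw [projCLM, ContinuousLinearMap.toLinearMap_comp, Submodule.toLinearMap_subtypeL, LinearMap.trace_comp_comm']
  have : ((Submodule.orthogonalProjection U : V →L[𝕜] U) : V →ₗ[𝕜] U) ∘ₗ U.subtype = LinearMap.id := by
    ext x
    simp [Submodule.orthogonalProjection_mem_subspace_eq_self]
  rw [this, LinearMap.trace_id]

/-- For a subset `S` of the space `(∧²V)*` of skew-symmetric bilinear forms
on a finite-dimensional vector space `V` with `dim V = n`, the restricted null-space
mapping `N|_S : S → Gr(V)` is continuous if and only if for every `k ∈ {0, …, n}` the set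
`S ∩ (∧²V)*_k` is relatively closed in `S`. -/
theorem continuous_nullSpace_restrict_iff
    (n : ℕ) (hn : finrank 𝕜 V = n)
    (S : Set (V →L[𝕜] V →L[𝕜] 𝕜)) (hS : ∀ B ∈ S, IsSkew B) :
    Continuous (S.restrict (fun B => nullSpace B)) ↔
      ∀ k ≤ n, IsClosed {B : S | finrank 𝕜 (nullSpace (B : V →L[𝕜] V →L[𝕜] 𝕜)) = k} := by
  constructor
  · intro hcont k hk
    have hc2 : Continuous (fun b : S => projCLM (nullSpace (b : V →L[𝕜] V →L[𝕜] 𝕜))) := by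
      have hdom : Continuous
          (fun W : Submodule 𝕜 V => (W.subtypeL.comp (Submodule.orthogonalProjection W) : V →L[𝕜] V)) :=
        continuous_induced_dom
      exact hdom.comp hcont
    set τ : (V →L[𝕜] V) →ₗ[𝕜] 𝕜 := (LinearMap.trace 𝕜 V) ∘ₗ (ContinuousLinearMap.coeLM 𝕜)
      with hτ
    have hτc : Continuous τ := LinearMap.continuous_of_finiteDimensional τ
    have heq : {B : S | finrank 𝕜 (nullSpace (B : V →L[𝕜] V →L[𝕜] 𝕜)) = k}
        = (fun b : S => τ (projCLM (nullSpace (b : V →L[𝕜] V →L[𝕜] 𝕜)))) ⁻¹' {(k : 𝕜)} := by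
      ext b
      simp only [Set.mem_setOf_eq, Set.mem_preimage, Set.mem_singleton_iff, hτ,
        LinearMap.comp_apply, ContinuousLinearMap.coeLM_apply]
      rw [trace_projCLM]
      exact ⟨fun h => by rw [h], fun h => Nat.cast_injective h⟩
    rw [heq]
    exact IsClosed.preimage (hτc.comp hc2) isClosed_singleton
  · intro hclosed
    have key : Continuous (fun b : S => projCLM (nullSpace (b : V →L[𝕜] V →L[𝕜] 𝕜))) := by
      rw [continuous_iff_continuousAt]
      intro b₀
      have hgoal : ∀ ε > 0, ∃ δ > 0, ∀ b : S, dist b b₀ < δ →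
          dist (projCLM (nullSpace (b : V →L[𝕜] V →L[𝕜] 𝕜)))
            (projCLM (nullSpace (b₀ : V →L[𝕜] V →L[𝕜] 𝕜))) < ε := ?_
      · exact Metric.continuousAt_iff.2 hgoal
      intro ε hε
      set k₀ := finrank 𝕜 (nullSpace (b₀ : V →L[𝕜] V →L[𝕜] 𝕜)) with hk₀
      have hopen : IsOpen {b : S | finrank 𝕜 (nullSpace (b : V →L[𝕜] V →L[𝕜] 𝕜)) = k₀} := by
        rw [← isClosed_compl_iff]
        have hcompl : {b : S | finrank 𝕜 (nullSpace (b : V →L[𝕜] V →L[𝕜] 𝕜)) = k₀}ᶜ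
            = ⋃ k ∈ (Finset.range (n+1)).erase k₀,
                {b : S | finrank 𝕜 (nullSpace (b : V →L[𝕜] V →L[𝕜] 𝕜)) = k} := by
          ext b
          simp only [Set.mem_compl_iff, Set.mem_setOf_eq, Set.mem_iUnion, Finset.mem_erase,
            Finset.mem_range, exists_prop]
          constructor
          · intro hne
            refine ⟨finrank 𝕜 (nullSpace (b : V →L[𝕜] V →L[𝕜] 𝕜)), ⟨hne, ?_⟩, rfl⟩
            have hle : finrank 𝕜 (nullSpace (b : V →L[𝕜] V →L[𝕜] 𝕜)) ≤ finrank 𝕜 V :=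
              Submodule.finrank_le _
            omega
          · rintro ⟨k, ⟨hne, _⟩, hkk⟩
            rw [hkk]; exact hne
        rw [hcompl]
        exact isClosed_biUnion_finset fun k hkmem => by
          have h2 := (Finset.mem_erase.1 hkmem).2
          rw [Finset.mem_range] at h2
          exact hclosed k (by omega)
      have hmem₀ : b₀ ∈ {b : S | finrank 𝕜 (nullSpace (b : V →L[𝕜] V →L[𝕜] 𝕜)) = k₀} := by
        simp only [Set.mem_setOf_eq, hk₀]
      obtain ⟨δ₁, hδ₁, hball⟩ := Metric.isOpen_iff.1 hopen b₀ hmem₀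
      obtain ⟨δ₂, hδ₂, hker⟩ :=
        ker_proj_close (𝕜 := 𝕜) ((b₀ : V →L[𝕜] V →L[𝕜] 𝕜).flip) (half_pos hε)
      refine ⟨min δ₁ δ₂, lt_min hδ₁ hδ₂, ?_⟩
      intro b hb
      have hfr : finrank 𝕜 (nullSpace (b : V →L[𝕜] V →L[𝕜] 𝕜)) = k₀ :=
        hball (Metric.mem_ball.2 (lt_of_lt_of_le hb (min_le_left _ _)))
      have hdistval : dist (b : V →L[𝕜] V →L[𝕜] 𝕜) (b₀ : V →L[𝕜] V →L[𝕜] 𝕜) < δ₂ := by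
        rw [← Subtype.dist_eq]
        exact lt_of_lt_of_le hb (min_le_right _ _)
      have hflip : ‖(b : V →L[𝕜] V →L[𝕜] 𝕜).flip - (b₀ : V →L[𝕜] V →L[𝕜] 𝕜).flip‖ < δ₂ := by
        have heq2 : (b : V →L[𝕜] V →L[𝕜] 𝕜).flip - (b₀ : V →L[𝕜] V →L[𝕜] 𝕜).flip
            = ((b : V →L[𝕜] V →L[𝕜] 𝕜) - (b₀ : V →L[𝕜] V →L[𝕜] 𝕜)).flip := by
          ext v w
          simp [ContinuousLinearMap.flip_apply, ContinuousLinearMap.sub_apply]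
        rw [heq2, ContinuousLinearMap.opNorm_flip]
        exact lt_of_eq_of_lt
          (dist_eq_norm (b : V →L[𝕜] V →L[𝕜] 𝕜) (b₀ : V →L[𝕜] V →L[𝕜] 𝕜)).symm hdistval
      have hrk : finrank 𝕜 (LinearMap.ker ((b : V →L[𝕜] V →L[𝕜] 𝕜).flip : V →ₗ[𝕜] V →L[𝕜] 𝕜))
          = finrank 𝕜 (LinearMap.ker ((b₀ : V →L[𝕜] V →L[𝕜] 𝕜).flip : V →ₗ[𝕜] V →L[𝕜] 𝕜)) := by
        rw [← nullSpace_eq_ker, ← nullSpace_eq_ker, hfr, hk₀]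
      have hfin := hker _ hflip hrk
      rw [dist_eq_norm]
      calc ‖projCLM (nullSpace (b : V →L[𝕜] V →L[𝕜] 𝕜))
            - projCLM (nullSpace (b₀ : V →L[𝕜] V →L[𝕜] 𝕜))‖
          = ‖projCLM (LinearMap.ker ((b : V →L[𝕜] V →L[𝕜] 𝕜).flip : V →ₗ[𝕜] V →L[𝕜] 𝕜))
            - projCLM (LinearMap.ker ((b₀ : V →L[𝕜] V →L[𝕜] 𝕜).flip : V →ₗ[𝕜] V →L[𝕜] 𝕜))‖ := by
            rw [nullSpace_eq_ker, nullSpace_eq_ker]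
        _ ≤ ε/2 := hfin
        _ < ε := half_lt_self hε
    exact continuous_induced_rng.2 key
end
end
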